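/- Let n ≥ 2 and let G be the graph obtained from the complete graph K_n by adding, for every edge e of K_n, a new vertex u_e adjacent exactly to the two endpoints of e. Then G is well-f-covered and f(G) = n(n-1)/2 + 1. -/

import Mathlib

/-!
Three vertices of `K_n` form a triangle, and so do two vertices `i, j` together with `u_{ij}`.
These are the only obstructions: if an induced subgraph avoids them, each `u_e` in it has at
most one neighbour, so a cycle could only use the at most two vertices of `K_n` it contains.
Hence a maximal induced forest consists of one vertex of `K_n` and all `u_e`, or of two
vertices `i, j` and all `u_e` with `e ≠ {i, j}`; either way it has `C(n, 2) + 1` vertices.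
-/

/-- `X` induces a forest in `G`: the subgraph induced by `X` is acyclic. -/
def IsInducedForest {V : Type*} (G : SimpleGraph V) (X : Finset V) : Prop :=
  (G.induce (X : Set V)).IsAcyclic

/-- `X` is a maximal induced forest of `G`. -/
def IsMaximalInducedForest {V : Type*} (G : SimpleGraph V) (X : Finset V) : Prop :=
  IsInducedForest G X ∧ ∀ Y : Finset V, X ⊂ Y → ¬ IsInducedForest G Y

/-- The forest number of `G`: maximum cardinality of an induced forest. -/
noncomputable def forestNum {V : Type*} (G : SimpleGraph V) : ℕ :=
  sSup {n | ∃ X : Finset V, IsInducedForest G X ∧ X.card = n}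

/-- `G` is well-f-covered: all maximal induced forests have the same cardinality. -/
def WellFCovered {V : Type*} (G : SimpleGraph V) : Prop :=
  ∀ X Y : Finset V, IsMaximalInducedForest G X → IsMaximalInducedForest G Y →
    X.card = Y.card

def IsIndepFinset {V : Type*} (G : SimpleGraph V) (X : Finset V) : Prop :=
  ∀ ⦃u⦄, u ∈ X → ∀ ⦃v⦄, v ∈ X → ¬ G.Adj u v

def IsMaximalIndepSet {V : Type*} (G : SimpleGraph V) (X : Finset V) : Prop :=
  IsIndepFinset G X ∧ ∀ Y : Finset V, X ⊂ Y → ¬ IsIndepFinset G Y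

noncomputable def indepNum {V : Type*} (G : SimpleGraph V) : ℕ :=
  sSup {n | ∃ X : Finset V, IsIndepFinset G X ∧ X.card = n}

def WellCovered {V : Type*} (G : SimpleGraph V) : Prop :=
  ∀ X Y : Finset V, IsMaximalIndepSet G X → IsMaximalIndepSet G Y → X.card = Y.card

/-- The join of two graphs on disjoint vertex sets. -/
def joinGraph {V W : Type*} (G : SimpleGraph V) (H : SimpleGraph W) :
    SimpleGraph (V ⊕ W) where
  Adj a b :=
    match a, b with
    | Sum.inl u, Sum.inl v => G.Adj u v
    | Sum.inr u, Sum.inr v => H.Adj u v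
    | Sum.inl _, Sum.inr _ => True
    | Sum.inr _, Sum.inl _ => True
  symm := by constructor; rintro (u|u) (v|v) h <;> first | exact h.symm | trivial
  loopless := by constructor; rintro (u|u) h <;> exact SimpleGraph.irrefl _ h

/-- The graph obtained from the complete graph on `Fin n` by adding, for each
2-element subset `e` of `Fin n`, a new vertex adjacent exactly to the two elements
of `e`. -/
def completePlusEdgeVertices (n : ℕ) :
    SimpleGraph (Fin n ⊕ {e : Finset (Fin n) // e.card = 2}) :=
  SimpleGraph.fromRel fun a b =>
    match a, b with
    | Sum.inl i, Sum.inl j => i ≠ j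
    | Sum.inl i, Sum.inr e => i ∈ e.val
    | Sum.inr _, _ => False

open SimpleGraph Finset

namespace SimpleGraph

variable {W : Type*} {H : SimpleGraph W}

/-- A cycle has at least three distinct vertices, each with two distinct neighbours on it. -/
theorem isAcyclic_of_neighborSet_subsingleton (s : Set W) (hs : s.encard ≤ 2)
    (h : ∀ w ∉ s, (H.neighborSet w).Subsingleton) : H.IsAcyclic := by
  classical
  intro v c hc
  obtain ⟨w, hw, hws⟩ : ∃ w ∈ c.support, w ∉ s := by
    by_contra! hsub
    have hcard : 3 ≤ c.support.tail.toFinset.card := by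
      rw [List.toFinset_card_of_nodup hc.support_nodup, List.length_tail, Walk.length_support]
      simpa using hc.three_le_length
    have hle := Set.encard_le_encard (s := (c.support.tail.toFinset : Set W)) (t := s)
      fun x hx => hsub x (List.mem_of_mem_tail (List.mem_toFinset.mp hx))
    rw [Set.encard_coe_eq_coe_finsetCard] at hle
    have := hle.trans hs
    norm_cast at this
    omega
  obtain ⟨x, y, hxy, hnb⟩ := Set.ncard_eq_two.mp (hc.ncard_neighborSet_toSubgraph_eq_two hw)
  have hadj : ∀ z ∈ c.toSubgraph.neighborSet w, z ∈ H.neighborSet w := fun z hz => hz.adj_sub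
  exact hxy (h w hws (hadj x (by simp [hnb])) (hadj y (by simp [hnb])))

end SimpleGraph

section InducedForest

variable {V : Type*} {G : SimpleGraph V}

lemma isInducedForest_empty : IsInducedForest G ∅ :=
  fun v => absurd v.2 (by simp)

variable [Finite V]

lemma IsInducedForest.exists_isMaximalInducedForest_superset {X : Finset V}
    (hX : IsInducedForest G X) : ∃ Y, X ⊆ Y ∧ IsMaximalInducedForest G Y := by
  obtain ⟨Y, hXY, hY⟩ := Finite.exists_le_maximal hX
  exact ⟨Y, hXY, hY.prop, fun Z hYZ hZ => hYZ.not_ge (hY.le_of_ge hZ hYZ.le)⟩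

lemma forestNum_eq_of_forall_isMaximalInducedForest {m : ℕ}
    (h : ∀ X, IsMaximalInducedForest G X → #X = m) : forestNum G = m := by
  have hle : ∀ X, IsInducedForest G X → #X ≤ m := fun X hX => by
    obtain ⟨Y, hXY, hY⟩ := hX.exists_isMaximalInducedForest_superset
    exact h Y hY ▸ card_le_card hXY
  obtain ⟨Y, -, hY⟩ := (isInducedForest_empty (G := G)).exists_isMaximalInducedForest_superset
  exact IsGreatest.csSup_eq ⟨⟨Y, hY.1, h Y hY⟩, by rintro _ ⟨X, hX, rfl⟩; exact hle X hX⟩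

end InducedForest

abbrev TwoSubset (n : ℕ) := {e : Finset (Fin n) // e.card = 2}

namespace completePlusEdgeVertices

variable {n : ℕ}

@[simp]
lemma adj_inl_inl {i j : Fin n} :
    (completePlusEdgeVertices n).Adj (.inl i) (.inl j) ↔ i ≠ j := by
  simp [completePlusEdgeVertices, ne_comm]

@[simp]
lemma adj_inl_inr {i : Fin n} {e : TwoSubset n} :
    (completePlusEdgeVertices n).Adj (.inl i) (.inr e) ↔ i ∈ e.val := by
  simp [completePlusEdgeVertices]

@[simp]
lemma adj_inr_inl {i : Fin n} {e : TwoSubset n} :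
    (completePlusEdgeVertices n).Adj (.inr e) (.inl i) ↔ i ∈ e.val := by
  simp [completePlusEdgeVertices]

@[simp]
lemma not_adj_inr_inr {e f : TwoSubset n} :
    ¬ (completePlusEdgeVertices n).Adj (.inr e) (.inr f) := by
  simp [completePlusEdgeVertices]

lemma isInducedForest_iff (X : Finset (Fin n ⊕ TwoSubset n)) :
    IsInducedForest (completePlusEdgeVertices n) X ↔
      #X.toLeft ≤ 2 ∧ ∀ e, .inr e ∈ X → ¬ e.val ⊆ X.toLeft := by
  constructor
  · intro hX
    have no_triangle : ∀ a b c : (X : Set (Fin n ⊕ TwoSubset n)),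
        (completePlusEdgeVertices n).Adj a b → (completePlusEdgeVertices n).Adj a c →
          (completePlusEdgeVertices n).Adj b c → False :=
      fun a b c hab hac hbc =>
        hX.cliqueFree le_rfl {a, b, c} (is3Clique_triple_iff.mpr ⟨hab, hac, hbc⟩)
    refine ⟨?_, fun e he hsub => ?_⟩
    · by_contra! h
      obtain ⟨i, hi, j, hj, k, hk, hij, hik, hjk⟩ := two_lt_card.mp h
      rw [mem_toLeft] at hi hj hk
      exact no_triangle ⟨_, hi⟩ ⟨_, hj⟩ ⟨_, hk⟩ (by simpa) (by simpa) (by simpa)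
    · obtain ⟨i, j, hij, he2⟩ := card_eq_two.mp e.2
      rw [he2, insert_subset_iff, singleton_subset_iff, mem_toLeft, mem_toLeft] at hsub
      exact no_triangle ⟨_, hsub.1⟩ ⟨_, hsub.2⟩ ⟨_, he⟩ (by simpa) (by simp [he2]) (by simp [he2])
  · rintro ⟨hL, hR⟩
    refine isAcyclic_of_neighborSet_subsingleton (Subtype.val ⁻¹' (Sum.inl '' X.toLeft)) ?_ ?_
    · rw [Set.encard_preimage_of_injective_subset_range Subtype.val_injective
        (by rintro _ ⟨i, hi, rfl⟩; simpa using hi), Sum.inl_injective.injOn.encard_image,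
        Set.encard_coe_eq_coe_finsetCard]
      exact_mod_cast hL
    · rintro ⟨(i | e), hw⟩ hws
      · exact absurd ⟨i, by simpa using hw, rfl⟩ hws
      rintro ⟨(a | f), ha⟩ hxa ⟨(b | g), hb⟩ hxb <;>
        simp only [mem_neighborSet, comap_adj, Function.Embedding.subtype_apply, adj_inr_inl,
          not_adj_inr_inr] at hxa hxb
      by_contra hab
      have he : e.val = {a, b} :=
        (eq_of_subset_of_card_le (insert_subset hxa (singleton_subset_iff.mpr hxb))
          (by rw [e.2, card_pair (by simpa using hab)])).symm
      refine hR e hw ?_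
      rw [he, insert_subset_iff, singleton_subset_iff, mem_toLeft, mem_toLeft]
      exact ⟨ha, hb⟩

variable {X : Finset (Fin n ⊕ TwoSubset n)}

lemma inr_mem_iff_of_isMaximalInducedForest
    (hX : IsMaximalInducedForest (completePlusEdgeVertices n) X) (e : TwoSubset n) :
    .inr e ∈ X ↔ ¬ e.val ⊆ X.toLeft := by
  obtain ⟨hL, hR⟩ := (isInducedForest_iff X).mp hX.1
  refine ⟨hR e, fun he => ?_⟩
  by_contra hout
  refine hX.2 _ (ssubset_insert hout) ((isInducedForest_iff _).mpr ⟨by simpa using hL, ?_⟩)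
  simp only [mem_insert, Sum.inr.injEq, toLeft_insert_inr]
  rintro f (rfl | hf)
  exacts [he, hR f hf]

lemma toLeft_nonempty_of_isMaximalInducedForest (hn : 0 < n)
    (hX : IsMaximalInducedForest (completePlusEdgeVertices n) X) : X.toLeft.Nonempty := by
  by_contra! hempty
  have hout : .inl ⟨0, hn⟩ ∉ X := fun h => by simpa [hempty] using mem_toLeft.mpr h
  refine hX.2 _ (ssubset_insert hout) ((isInducedForest_iff _).mpr ⟨by simp [hempty], ?_⟩)
  intro e _ hsub
  simpa [hempty, e.2] using card_le_card hsub

lemma card_of_isMaximalInducedForest (hn : 0 < n)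
    (hX : IsMaximalInducedForest (completePlusEdgeVertices n) X) : #X = n.choose 2 + 1 := by
  have hR : X.toRight = univ.filter fun e : TwoSubset n => ¬ e.val ⊆ X.toLeft := by
    ext e
    simp [inr_mem_iff_of_isMaximalInducedForest hX]
  have hN : Fintype.card (TwoSubset n) = n.choose 2 := by simp [Fintype.card_finset_len]
  rw [← card_toLeft_add_card_toRight]
  obtain h1 | h2 : #X.toLeft = 1 ∨ #X.toLeft = 2 := by
    have := (toLeft_nonempty_of_isMaximalInducedForest hn hX).card_pos
    have := ((isInducedForest_iff X).mp hX.1).1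
    omega
  · have hR' : X.toRight = univ := by
      rw [hR, filter_true_of_mem]
      intro e _ hsub
      simpa [e.2, h1] using card_le_card hsub
    rw [h1, hR', card_univ, hN, add_comm]
  · set e₀ : TwoSubset n := ⟨X.toLeft, h2⟩
    have hR' : X.toRight = univ.erase e₀ := by
      rw [hR]
      ext e
      simp only [mem_filter, mem_univ, true_and, mem_erase, ne_eq, and_true, not_iff_not]
      exact ⟨fun hsub => Subtype.ext (eq_of_subset_of_card_le hsub (by rw [e.2, h2])),
        fun he => he ▸ subset_rfl⟩
    have hpos : 0 < n.choose 2 := hN ▸ Fintype.card_pos_iff.mpr ⟨e₀⟩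
    rw [h2, hR', card_erase_of_mem (mem_univ _), card_univ, hN]
    omega

end completePlusEdgeVertices

/-- For `n ≥ 2`, the graph obtained from `K_n` by adding, for every edge
`e` of `K_n`, a new vertex `u_e` adjacent exactly to the endpoints of `e`, is
well-f-covered with forest number `n(n-1)/2 + 1`. -/
theorem stmt11 (n : ℕ) (hn : 2 ≤ n) :
    WellFCovered (completePlusEdgeVertices n) ∧
      forestNum (completePlusEdgeVertices n) = n * (n - 1) / 2 + 1 := by
  have hcard : ∀ X, IsMaximalInducedForest (completePlusEdgeVertices n) X →
      #X = n * (n - 1) / 2 + 1 := fun X hX => by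
    rw [completePlusEdgeVertices.card_of_isMaximalInducedForest (by omega) hX,
      Nat.choose_two_right]
  exact ⟨fun X Y hX hY => (hcard X hX).trans (hcard Y hY).symm,
    forestNum_eq_of_forall_isMaximalInducedForest hcard⟩
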